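/- arXiv:1201.5689 — 9 statements merged into one kernel-verified Lean document; each statement's English description precedes it below -/
import Mathlib

section
/- Let q be a power of an odd prime with q ≡ 3 (mod 4), let n be even, and let α, β be nonzero elements of GF(q) with α² + β² + 1 = 0. Let C₀ be a self-dual code of length 2n over GF(q) with generator matrix G₀ having rows r₁,…,rₙ. Let x₁, x₂ ∈ GF(q)^{2n} satisfy x₁·x₂ = 0 and xᵢ·xᵢ = -1 for i = 1, 2. For each i set sᵢ = x₁·rᵢ, tᵢ = x₂·rᵢ, and yᵢ = (-sᵢ, -tᵢ, -αsᵢ - βtᵢ, -βsᵢ + αtᵢ) ∈ GF(q)^4. Then the (n+2) × (2n+4) matrix G whose first two rows are (1,0,0,0 | x₁) and (0,1,0,0 | x₂), and whose remaining rows are (yᵢ | rᵢ) for i = 1,…,n, generates a self-dual code over GF(q) of length 2n+4. -/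
/-- The dual of a code (submodule) under the standard inner product. -/
def dualCode {R : Type*} [CommRing R] {N : ℕ} (C : Submodule R (Fin N → R)) :
    Submodule R (Fin N → R) where
  carrier := {v | ∀ c ∈ C, ∑ i, v i * c i = 0}
  zero_mem' := by intro c hc; simp
  add_mem' := by
    intro a b ha hb c hc
    simpa [add_mul, Finset.sum_add_distrib] using by rw [ha c hc, hb c hc]; ring
  smul_mem' := by
    intro r a ha c hc
    simp only [Pi.smul_apply, smul_eq_mul, mul_assoc, ← Finset.mul_sum, Set.mem_setOf_eq]
    rw [ha c hc, mul_zero]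

/-- Rows of the building-up generator matrix. -/
def buildG {R : Type*} [CommRing R] {n k : ℕ} (α β : R)
    (x₁ x₂ : Fin (2 * n) → R) (r : Fin k → Fin (2 * n) → R) :
    (Fin 2 ⊕ Fin k) → Fin (4 + 2 * n) → R :=
  Sum.elim
    ![Fin.append ![1, 0, 0, 0] x₁, Fin.append ![0, 1, 0, 0] x₂]
    (fun i => Fin.append
      ![-(∑ j, x₁ j * r i j), -(∑ j, x₂ j * r i j),
        -α * (∑ j, x₁ j * r i j) - β * (∑ j, x₂ j * r i j),
        -β * (∑ j, x₁ j * r i j) + α * (∑ j, x₂ j * r i j)]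
      (r i))

open LinearMap Finset Module

/-- The standard (dot-product) bilinear form on `Fin N → F`. -/
noncomputable def stdB (F : Type*) [Field F] (N : ℕ) : LinearMap.BilinForm F (Fin N → F) :=
  Matrix.toLinearMap₂' F (1 : Matrix (Fin N) (Fin N) F)

lemma stdB_apply {F : Type*} [Field F] {N : ℕ} (v w : Fin N → F) :
    stdB F N v w = ∑ i, v i * w i := by
  simp [stdB, Matrix.toLinearMap₂'_apply, Matrix.one_apply, mul_ite, smul_eq_mul,
    Finset.sum_ite_eq]

lemma stdB_nondeg {F : Type*} [Field F] {N : ℕ} : (stdB F N).Nondegenerate :=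
  (Matrix.nondegenerate_of_det_ne_zero (by simp)).toLinearMap₂'

lemma stdB_refl {F : Type*} [Field F] {N : ℕ} : (stdB F N).IsRefl := by
  intro v w h
  rw [stdB_apply] at h ⊢
  simpa [mul_comm] using h

lemma mem_dualCode {F : Type*} [Field F] {N : ℕ} {C : Submodule F (Fin N → F)}
    {v : Fin N → F} : v ∈ dualCode C ↔ ∀ c ∈ C, ∑ i, v i * c i = 0 := Iff.rfl

lemma dualCode_eq_orthogonal {F : Type*} [Field F] {N : ℕ} (C : Submodule F (Fin N → F)) :
    dualCode C = (stdB F N).orthogonal C := by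
  ext v
  rw [mem_dualCode, LinearMap.BilinForm.mem_orthogonal_iff]
  constructor
  · intro h c hc
    have := h c hc
    rw [stdB_apply]
    simpa [mul_comm] using this
  · intro h c hc
    have := h c hc
    rw [stdB_apply] at this
    simpa [mul_comm] using this

lemma finrank_dualCode {F : Type*} [Field F] {N : ℕ} (C : Submodule F (Fin N → F)) :
    finrank F (dualCode C) = N - finrank F C := by
  rw [dualCode_eq_orthogonal, LinearMap.BilinForm.finrank_orthogonal stdB_nondeg]
  simp

lemma dot_append {F : Type*} [CommRing F] {m k : ℕ} (a b : Fin m → F) (v w : Fin k → F) :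
    ∑ i : Fin (m + k), Fin.append a v i * Fin.append b w i
      = (∑ i, a i * b i) + ∑ j, v j * w j := by
  rw [Fin.sum_univ_add]
  simp [Fin.append_left, Fin.append_right]

lemma sum_lin₂ {F : Type*} [CommRing F] {n : ℕ} (c u v : Fin n → F) (A B : F) :
    ∑ i, c i * (A * u i - B * v i) = A * (∑ i, c i * u i) - B * (∑ i, c i * v i) := by
  rw [Finset.mul_sum, Finset.mul_sum, ← Finset.sum_sub_distrib]
  exact Finset.sum_congr rfl fun i _ => by ring

lemma sum_lin₃ {F : Type*} [CommRing F] {n : ℕ} (c u v : Fin n → F) (A B : F) :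
    ∑ i, c i * (A * u i + B * v i) = A * (∑ i, c i * u i) + B * (∑ i, c i * v i) := by
  rw [Finset.mul_sum, Finset.mul_sum, ← Finset.sum_add_distrib]
  exact Finset.sum_congr rfl fun i _ => by ring

lemma sum_lin₀ {F : Type*} [CommRing F] {n : ℕ} (c u : Fin n → F) :
    ∑ i, c i * (-(u i)) = -(∑ i, c i * u i) := by
  simp [mul_neg]

lemma buildG_orth {F : Type*} [Field F] {n : ℕ}
    (α β : F) (hαβ : α ^ 2 + β ^ 2 + 1 = 0)
    (r : Fin n → Fin (2 * n) → F)
    (hrr : ∀ i j, ∑ l, r i l * r j l = 0)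
    (x₁ x₂ : Fin (2 * n) → F)
    (h12 : ∑ j, x₁ j * x₂ j = 0)
    (h11 : ∑ j, x₁ j * x₁ j = -1) (h22 : ∑ j, x₂ j * x₂ j = -1) :
    ∀ a b, ∑ i, buildG α β x₁ x₂ r a i * buildG α β x₁ x₂ r b i = 0 := by
  rintro (a | i) (b | j)
  · fin_cases a <;> fin_cases b <;>
      · simp only [buildG, Fin.mk_zero, Fin.mk_one, Sum.elim_inl, Matrix.cons_val_zero,
          Matrix.cons_val_one, Matrix.head_cons]
        rw [dot_append, Fin.sum_univ_four]
        simp [h11, h12, h22, mul_comm]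
  · fin_cases a <;>
      · simp only [buildG, Fin.mk_zero, Fin.mk_one, Sum.elim_inl, Sum.elim_inr,
          Matrix.cons_val_zero, Matrix.cons_val_one, Matrix.head_cons]
        rw [dot_append, Fin.sum_univ_four]
        simp only [Matrix.cons_val_zero, Matrix.cons_val_one, Matrix.head_cons,
          Matrix.cons_val_two, Matrix.cons_val_three, Matrix.tail_cons, Matrix.head_cons]
        ring
  · fin_cases b <;>
      · simp only [buildG, Fin.mk_zero, Fin.mk_one, Sum.elim_inl, Sum.elim_inr,
          Matrix.cons_val_zero, Matrix.cons_val_one, Matrix.head_cons]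
        rw [dot_append, Fin.sum_univ_four]
        simp only [Matrix.cons_val_zero, Matrix.cons_val_one, Matrix.head_cons,
          Matrix.cons_val_two, Matrix.cons_val_three, Matrix.tail_cons]
        simp only [mul_comm]
        ring_nf
  · simp only [buildG, Sum.elim_inr]
    rw [dot_append, Fin.sum_univ_four, hrr i j]
    simp only [Matrix.cons_val_zero, Matrix.cons_val_one, Matrix.head_cons,
      Matrix.cons_val_two, Matrix.cons_val_three, Matrix.tail_cons]
    linear_combination ((∑ l, x₁ l * r i l) * (∑ l, x₁ l * r j l)
      + (∑ l, x₂ l * r i l) * (∑ l, x₂ l * r j l)) * hαβ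

lemma buildG_linearIndependent {F : Type*} [Field F] {n : ℕ}
    (α β : F) (hαβ : α ^ 2 + β ^ 2 + 1 = 0)
    (r : Fin n → Fin (2 * n) → F) (hrind : LinearIndependent F r)
    (x₁ x₂ : Fin (2 * n) → F) :
    LinearIndependent F (buildG α β x₁ x₂ r) := by
  rw [Fintype.linearIndependent_iff]
  intro g hg
  have hval : ∀ pz : Fin (4 + 2 * n),
      g (Sum.inl 0) * Fin.append ![1, 0, 0, 0] x₁ pz
      + g (Sum.inl 1) * Fin.append ![0, 1, 0, 0] x₂ pz
      + ∑ i, g (Sum.inr i) * Fin.append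
          ![-(∑ j, x₁ j * r i j), -(∑ j, x₂ j * r i j),
            -α * (∑ j, x₁ j * r i j) - β * (∑ j, x₂ j * r i j),
            -β * (∑ j, x₁ j * r i j) + α * (∑ j, x₂ j * r i j)]
          (r i) pz = 0 := by
    intro pz
    have h := congrFun hg pz
    simp only [Finset.sum_apply, Pi.smul_apply, smul_eq_mul, Pi.zero_apply, Fintype.sum_sum_type,
      Fin.sum_univ_two, buildG, Sum.elim_inl, Sum.elim_inr, Matrix.cons_val_zero,
      Matrix.cons_val_one, Matrix.head_cons] at h
    linear_combination h
  have h2 := hval (Fin.castAdd (2 * n) 2)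
  have h3 := hval (Fin.castAdd (2 * n) 3)
  simp only [Fin.append_left, Matrix.cons_val_two, Matrix.tail_cons, Matrix.head_cons,
    mul_zero, zero_add] at h2
  simp only [Fin.append_left, Matrix.cons_val_three, Matrix.tail_cons, Matrix.head_cons,
    mul_zero, zero_add] at h3
  rw [sum_lin₂ (fun i => g (Sum.inr i)) _ _ (-α) β] at h2
  rw [sum_lin₃ (fun i => g (Sum.inr i)) _ _ (-β) α] at h3
  set S := ∑ i, g (Sum.inr i) * ∑ j, x₁ j * r i j with hSdef
  set T := ∑ i, g (Sum.inr i) * ∑ j, x₂ j * r i j with hTdef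
  have hS : S = 0 := by
    have h5 : (α ^ 2 + β ^ 2) * S = 0 := by linear_combination (-α) * h2 + (-β) * h3
    have h6 : α ^ 2 + β ^ 2 = -1 := by linear_combination hαβ
    rw [h6] at h5
    simpa using h5
  have hT : T = 0 := by
    have h5 : (α ^ 2 + β ^ 2) * T = 0 := by linear_combination (-β) * h2 + α * h3
    have h6 : α ^ 2 + β ^ 2 = -1 := by linear_combination hαβ
    rw [h6] at h5
    simpa using h5
  have h0 := hval (Fin.castAdd (2 * n) 0)
  have h1 := hval (Fin.castAdd (2 * n) 1)
  simp only [Fin.append_left, Matrix.cons_val_zero, Matrix.cons_val_one, Matrix.head_cons,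
    mul_zero, mul_one, zero_add, add_zero] at h0 h1
  rw [sum_lin₀ (fun i => g (Sum.inr i))] at h0 h1
  rw [← hSdef] at h0
  rw [← hTdef] at h1
  have ha1 : g (Sum.inl 0) = 0 := by linear_combination h0 + hS
  have ha2 : g (Sum.inl 1) = 0 := by linear_combination h1 + hT
  have hc : ∀ i, g (Sum.inr i) = 0 := by
    apply Fintype.linearIndependent_iff.mp hrind
    funext jj
    have h := hval (Fin.natAdd 4 jj)
    simp only [Fin.append_right, ha1, ha2, zero_mul, zero_add] at h
    simpa [Finset.sum_apply, smul_eq_mul] using h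
  rintro (a | i)
  · fin_cases a
    · exact ha1
    · exact ha2
  · exact hc i

/-- the building-up construction produces a self-dual code of length 2n+4. -/
theorem stmt2 {F : Type*} [Field F] [Fintype F] (p k : ℕ) (hp : p.Prime) (hpodd : Odd p)
    (hcard : Fintype.card F = p ^ k) (h4 : Fintype.card F % 4 = 3)
    (n : ℕ) (hn : Even n)
    (α β : F) (hα : α ≠ 0) (hβ : β ≠ 0) (hαβ : α ^ 2 + β ^ 2 + 1 = 0)
    (r : Fin n → Fin (2 * n) → F) (C₀ : Submodule F (Fin (2 * n) → F))
    (hgen : C₀ = Submodule.span F (Set.range r)) (hsd : C₀ = dualCode C₀)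
    (x₁ x₂ : Fin (2 * n) → F)
    (h12 : ∑ j, x₁ j * x₂ j = 0)
    (h11 : ∑ j, x₁ j * x₁ j = -1) (h22 : ∑ j, x₂ j * x₂ j = -1) :
    Submodule.span F (Set.range (buildG α β x₁ x₂ r)) =
      dualCode (Submodule.span F (Set.range (buildG α β x₁ x₂ r))) := by
  classical
  have hrC : ∀ i, r i ∈ C₀ := fun i => hgen ▸ Submodule.subset_span ⟨i, rfl⟩
  have hrr : ∀ i j, ∑ l, r i l * r j l = 0 := by
    intro i j
    have hi : r i ∈ dualCode C₀ := by rw [← hsd]; exact hrC i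
    exact hi (r j) (hrC j)
  -- dimension of C₀ is n
  have h2n : finrank F C₀ = n := by
    have h1 : finrank F C₀ ≤ 2 * n := by simpa using Submodule.finrank_le C₀
    have h2 := finrank_dualCode C₀
    rw [← hsd] at h2
    omega
  have hrind : LinearIndependent F r := by
    rw [linearIndependent_iff_card_eq_finrank_span]
    show Fintype.card (Fin n) = finrank F (Submodule.span F (Set.range r))
    rw [← hgen, h2n, Fintype.card_fin]
  have hind : LinearIndependent F (buildG α β x₁ x₂ r) :=
    buildG_linearIndependent α β hαβ r hrind x₁ x₂
  have horth := buildG_orth α β hαβ r hrr x₁ x₂ h12 h11 h22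
  set C := Submodule.span F (Set.range (buildG α β x₁ x₂ r)) with hC
  have hfr : finrank F C = n + 2 := by
    rw [hC, finrank_span_eq_card hind]
    simp [add_comm]
  have hle : C ≤ dualCode C := by
    rw [hC, Submodule.span_le]
    rintro v ⟨a, rfl⟩
    rw [SetLike.mem_coe, mem_dualCode]
    intro c hc
    induction hc using Submodule.span_induction with
    | mem x hx =>
      obtain ⟨b, rfl⟩ := hx
      exact horth a b
    | zero => simp
    | add x y _ _ hx hy =>
      simpa [mul_add, Finset.sum_add_distrib] using by rw [hx, hy]; ring
    | smul t x _ hx =>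
      have hh : ∑ i, buildG α β x₁ x₂ r a i * (t • x) i
          = t * ∑ i, buildG α β x₁ x₂ r a i * x i := by
        rw [Finset.mul_sum]
        exact Finset.sum_congr rfl fun i _ => by
          simp only [Pi.smul_apply, smul_eq_mul]; ring
      rw [hh, hx, mul_zero]
  refine Submodule.eq_of_le_of_finrank_le hle ?_
  rw [finrank_dualCode, hfr]
  omega
end

section
/- Let R be a finite commutative chain ring and suppose there exist units α, β in R with α² + β² + 1 = 0. Let C₀ be a self-dual code over R of length 2n with generator matrix G₀ having rows r₁,…,r_k (so that |C₀| = |R|^n). Let x₁, x₂ ∈ R^{2n} with x₁·x₂ = 0 and xᵢ·xᵢ = -1 for i = 1, 2. For each i set sᵢ = x₁·rᵢ, tᵢ = x₂·rᵢ, and yᵢ = (-sᵢ, -tᵢ, -αsᵢ - βtᵢ, -βsᵢ + αtᵢ). Then the matrix G with rows (1,0,0,0 | x₁), (0,1,0,0 | x₂), and (yᵢ | rᵢ) for i = 1,…,k generates a self-dual code C over R of length 2n+4, i.e., C = C^⊥ and |C| = |R|^{n+2}. -/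
open Matrix

namespace Stmt6Aux

variable {R : Type*} [CommRing R] {N n k : ℕ}

lemma mem_dualCode_span_iff {ι : Type*} (f : ι → Fin N → R) (v : Fin N → R) :
    v ∈ dualCode (Submodule.span R (Set.range f)) ↔ ∀ i, v ⬝ᵥ f i = 0 := by
  constructor
  · intro hv i; exact hv _ (Submodule.subset_span ⟨i, rfl⟩)
  · intro h c hc
    show v ⬝ᵥ c = 0
    induction hc using Submodule.span_induction with
    | mem c hcmem => obtain ⟨i, rfl⟩ := hcmem; exact h i
    | zero => simp
    | add c d _ _ hc hd => rw [dotProduct_add, hc, hd, add_zero]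
    | smul t c _ hc => rw [dotProduct_smul, hc, smul_zero]

lemma dot_split (v : Fin (4 + 2*n) → R) (u : Fin 4 → R) (x : Fin (2*n) → R) :
    v ⬝ᵥ Fin.append u x =
      (∑ i : Fin 4, v (Fin.castAdd (2*n) i) * u i) + (fun j => v (Fin.natAdd 4 j)) ⬝ᵥ x := by
  simp [dotProduct, Fin.sum_univ_add, Fin.append_left, Fin.append_right]

lemma append_dot_append (u u' : Fin 4 → R) (x x' : Fin (2*n) → R) :
    Fin.append u x ⬝ᵥ Fin.append u' x' = u ⬝ᵥ u' + x ⬝ᵥ x' := by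
  simp [dotProduct, Fin.sum_univ_add, Fin.append_left, Fin.append_right]

lemma sum_mul_sub (u w y z : Fin N → R) (a b : R) :
    ∑ j, u j * (w j - a * y j - b * z j)
      = ∑ j, u j * w j - a * ∑ j, u j * y j - b * ∑ j, u j * z j := by
  rw [Finset.mul_sum, Finset.mul_sum, ← Finset.sum_sub_distrib, ← Finset.sum_sub_distrib]
  exact Finset.sum_congr rfl fun j _ => by ring

lemma sub_sum_mul (u w y z : Fin N → R) (a b : R) :
    ∑ j, (w j - a * y j - b * z j) * u j
      = ∑ j, w j * u j - a * ∑ j, y j * u j - b * ∑ j, z j * u j := by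
  rw [Finset.mul_sum, Finset.mul_sum, ← Finset.sum_sub_distrib, ← Finset.sum_sub_distrib]
  exact Finset.sum_congr rfl fun j _ => by ring

lemma sum_comm' (u z : Fin N → R) : ∑ j, u j * z j = ∑ j, z j * u j :=
  Finset.sum_congr rfl fun j _ => mul_comm _ _

/-- The linear parametrization of the built code. -/
def psi (α β : R) (x₁ x₂ : Fin (2*n) → R) :
    (R × R × (Fin (2*n) → R)) →ₗ[R] (Fin (4 + 2*n) → R) where
  toFun p := Fin.append
    ![p.1 - x₁ ⬝ᵥ p.2.2, p.2.1 - x₂ ⬝ᵥ p.2.2,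
      -α * (x₁ ⬝ᵥ p.2.2) - β * (x₂ ⬝ᵥ p.2.2),
      -β * (x₁ ⬝ᵥ p.2.2) + α * (x₂ ⬝ᵥ p.2.2)]
    (p.1 • x₁ + p.2.1 • x₂ + p.2.2)
  map_add' p q := by
    funext i
    refine Fin.addCases (fun i => ?_) (fun i => ?_) i
    · simp only [Pi.add_apply, Fin.append_left, Prod.fst_add, Prod.snd_add, dotProduct_add]
      fin_cases i <;>
        simp [Matrix.cons_val_zero, Matrix.cons_val_one, Matrix.head_cons] <;> ring
    · simp only [Pi.add_apply, Fin.append_right, Prod.fst_add, Prod.snd_add]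
      simp [Pi.add_apply, add_smul]
      ring
  map_smul' t p := by
    funext i
    refine Fin.addCases (fun i => ?_) (fun i => ?_) i
    · simp only [Pi.smul_apply, Fin.append_left, Prod.smul_fst, Prod.smul_snd,
        dotProduct_smul, smul_eq_mul, RingHom.id_apply]
      fin_cases i <;>
        simp [Matrix.cons_val_zero, Matrix.cons_val_one, Matrix.head_cons] <;> ring
    · simp only [Pi.smul_apply, Fin.append_right, Prod.smul_fst, Prod.smul_snd,
        RingHom.id_apply, smul_smul]
      simp [smul_smul, smul_eq_mul]
      ring

end Stmt6Aux

open Stmt6Aux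

/-- building-up construction over a finite commutative chain ring. -/
theorem stmt6 {R : Type*} [CommRing R] [Fintype R] [Nontrivial R]
    (hchain : ∀ I J : Ideal R, I ≤ J ∨ J ≤ I)
    (α β : R) (hα : IsUnit α) (hβ : IsUnit β) (hαβ : α ^ 2 + β ^ 2 + 1 = 0)
    (n k : ℕ) (r : Fin k → Fin (2 * n) → R)
    (C₀ : Submodule R (Fin (2 * n) → R))
    (hgen : C₀ = Submodule.span R (Set.range r)) (hsd : C₀ = dualCode C₀)
    (hcard₀ : Nat.card C₀ = Nat.card R ^ n)
    (x₁ x₂ : Fin (2 * n) → R)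
    (h12 : ∑ j, x₁ j * x₂ j = 0)
    (h11 : ∑ j, x₁ j * x₁ j = -1) (h22 : ∑ j, x₂ j * x₂ j = -1) :
    Submodule.span R (Set.range (buildG α β x₁ x₂ r)) =
        dualCode (Submodule.span R (Set.range (buildG α β x₁ x₂ r))) ∧
      Nat.card (Submodule.span R (Set.range (buildG α β x₁ x₂ r))) =
        Nat.card R ^ (n + 2) := by
  classical
  set G := buildG α β x₁ x₂ r with hGdef
  set ψ := Stmt6Aux.psi (n := n) α β x₁ x₂ with hψdef
  set P : Submodule R (R × R × (Fin (2*n) → R)) :=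
    (⊤ : Submodule R R).prod (((⊤ : Submodule R R)).prod C₀) with hPdef
  have hre : ∀ i, r i ∈ C₀ := fun i => by
    rw [hgen]; exact Submodule.subset_span ⟨i, rfl⟩
  have hsd' : C₀ = dualCode (Submodule.span R (Set.range r)) := by rw [← hgen]; exact hsd
  have hrr : ∀ i j, ∑ x, r i x * r j x = 0 := fun i j => by
    have : r i ∈ dualCode (Submodule.span R (Set.range r)) := by rw [← hsd']; exact hre i
    exact (mem_dualCode_span_iff r (r i)).mp this j
  -- generator identities
  have hGl0 : G (Sum.inl 0) = Fin.append ![1, 0, 0, 0] x₁ := rfl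
  have hGl1 : G (Sum.inl 1) = Fin.append ![0, 1, 0, 0] x₂ := rfl
  have hGr : ∀ i, G (Sum.inr i) = Fin.append
      ![-(∑ j, x₁ j * r i j), -(∑ j, x₂ j * r i j),
        -α * (∑ j, x₁ j * r i j) - β * (∑ j, x₂ j * r i j),
        -β * (∑ j, x₁ j * r i j) + α * (∑ j, x₂ j * r i j)] (r i) := fun i => rfl
  have hg1 : ψ (1, 0, 0) = G (Sum.inl 0) := by
    rw [hGl0]; funext i
    refine Fin.addCases (fun i => ?_) (fun i => ?_) i
    · simp only [hψdef, Stmt6Aux.psi, LinearMap.coe_mk, AddHom.coe_mk, Fin.append_left]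
      fin_cases i <;> simp
    · simp [hψdef, Stmt6Aux.psi, Fin.append_right]
  have hg2 : ψ (0, 1, 0) = G (Sum.inl 1) := by
    rw [hGl1]; funext i
    refine Fin.addCases (fun i => ?_) (fun i => ?_) i
    · simp only [hψdef, Stmt6Aux.psi, LinearMap.coe_mk, AddHom.coe_mk, Fin.append_left]
      fin_cases i <;> simp
    · simp [hψdef, Stmt6Aux.psi, Fin.append_right]
  have hgr : ∀ i, ψ (0, 0, r i) = G (Sum.inr i) := by
    intro i
    rw [hGr i]; funext j
    refine Fin.addCases (fun j => ?_) (fun j => ?_) j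
    · simp only [hψdef, Stmt6Aux.psi, LinearMap.coe_mk, AddHom.coe_mk, Fin.append_left]
      fin_cases j <;> simp [dotProduct]
    · simp [hψdef, Stmt6Aux.psi, Fin.append_right]
  have hpsi0 : ∀ c ∈ Submodule.span R (Set.range r),
      ψ (0, 0, c) ∈ Submodule.span R (Set.range G) := by
    intro c hcs
    induction hcs using Submodule.span_induction with
    | mem c hcmem =>
      obtain ⟨i, rfl⟩ := hcmem
      rw [hgr i]; exact Submodule.subset_span ⟨Sum.inr i, rfl⟩
    | zero =>
      have : ((0 : R), (0 : R), (0 : Fin (2*n) → R)) = (0 : R × R × (Fin (2*n) → R)) := rfl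
      rw [this, map_zero]; exact Submodule.zero_mem _
    | add u v _ _ hu hv =>
      have : ((0 : R), (0 : R), u + v)
          = ((0 : R), (0 : R), u) + ((0 : R), (0 : R), v) := by simp [Prod.ext_iff]
      rw [this, map_add]; exact Submodule.add_mem _ hu hv
    | smul t u _ hu =>
      have : ((0 : R), (0 : R), t • u) = t • ((0 : R), (0 : R), u) := by simp [Prod.ext_iff]
      rw [this, _root_.map_smul]; exact Submodule.smul_mem _ _ hu
  -- span = image of ψ
  have hmap : Submodule.span R (Set.range G) = Submodule.map ψ P := by
    apply le_antisymm
    · rw [Submodule.span_le]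
      rintro _ ⟨idx, rfl⟩
      rcases idx with i | i
      · fin_cases i
        · exact ⟨(1, 0, 0), Submodule.mem_prod.mpr
            ⟨trivial, Submodule.mem_prod.mpr ⟨trivial, C₀.zero_mem⟩⟩, hg1⟩
        · exact ⟨(0, 1, 0), Submodule.mem_prod.mpr
            ⟨trivial, Submodule.mem_prod.mpr ⟨trivial, C₀.zero_mem⟩⟩, hg2⟩
      · exact ⟨(0, 0, r i), Submodule.mem_prod.mpr
          ⟨trivial, Submodule.mem_prod.mpr ⟨trivial, hre i⟩⟩, hgr i⟩
    · rintro _ ⟨⟨a, b, c⟩, hmem, rfl⟩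
      have hc : c ∈ C₀ := (Submodule.mem_prod.mp (Submodule.mem_prod.mp hmem).2).2
      have hdecomp : ψ (a, b, c) = a • ψ (1, 0, 0) + b • ψ (0, 1, 0) + ψ (0, 0, c) := by
        rw [← _root_.map_smul ψ, ← _root_.map_smul ψ, ← map_add, ← map_add]
        congr 1
        simp [Prod.ext_iff]
      rw [hdecomp, hg1, hg2]
      refine Submodule.add_mem _ (Submodule.add_mem _
        (Submodule.smul_mem _ _ (Submodule.subset_span ⟨Sum.inl 0, rfl⟩))
        (Submodule.smul_mem _ _ (Submodule.subset_span ⟨Sum.inl 1, rfl⟩))) ?_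
      exact hpsi0 c (by rw [← hgen]; exact hc)
  -- injectivity of ψ
  have hinj : Function.Injective ψ := by
    rw [injective_iff_map_eq_zero]
    rintro ⟨a, b, c⟩ hp
    have e := fun j => congrFun hp j
    have e0 : a - x₁ ⬝ᵥ c = 0 := by
      simpa [hψdef, Stmt6Aux.psi, Fin.append_left] using e (Fin.castAdd (2*n) 0)
    have e1 : b - x₂ ⬝ᵥ c = 0 := by
      simpa [hψdef, Stmt6Aux.psi, Fin.append_left] using e (Fin.castAdd (2*n) 1)
    have e2 : -α * (x₁ ⬝ᵥ c) - β * (x₂ ⬝ᵥ c) = 0 := by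
      simpa [hψdef, Stmt6Aux.psi, Fin.append_left] using e (Fin.castAdd (2*n) 2)
    have e3 : -β * (x₁ ⬝ᵥ c) + α * (x₂ ⬝ᵥ c) = 0 := by
      simpa [hψdef, Stmt6Aux.psi, Fin.append_left] using e (Fin.castAdd (2*n) 3)
    have ha : a = 0 := by
      linear_combination e0 + α * e2 + β * e3 + (x₁ ⬝ᵥ c) * hαβ
    have hb : b = 0 := by
      linear_combination e1 + β * e2 - α * e3 + (x₂ ⬝ᵥ c) * hαβ
    have hcz : c = 0 := by
      funext j
      have := e (Fin.natAdd 4 j)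
      simp only [hψdef, Stmt6Aux.psi, LinearMap.coe_mk, AddHom.coe_mk, Fin.append_right,
        Pi.add_apply, Pi.smul_apply, smul_eq_mul, Pi.zero_apply] at this
      rw [ha, hb] at this
      simpa using this
    simp [Prod.ext_iff, ha, hb, hcz]
  constructor
  · -- self-duality
    apply le_antisymm
    · -- C ⊆ C⊥
      rw [Submodule.span_le]
      rintro _ ⟨idx, rfl⟩
      rw [SetLike.mem_coe, mem_dualCode_span_iff]
      intro jdx
      rcases idx with i | i <;> rcases jdx with j | j
      · fin_cases i <;> fin_cases j
        · simp [hGdef, buildG, dotProduct, Fin.sum_univ_add, Fin.append_left,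
            Fin.append_right, Fin.sum_univ_four]
          linear_combination h11
        · simp [hGdef, buildG, dotProduct, Fin.sum_univ_add, Fin.append_left,
            Fin.append_right, Fin.sum_univ_four]
          linear_combination h12
        · simp [hGdef, buildG, dotProduct, Fin.sum_univ_add, Fin.append_left,
            Fin.append_right, Fin.sum_univ_four]
          linear_combination sum_comm' x₂ x₁ + h12
        · simp [hGdef, buildG, dotProduct, Fin.sum_univ_add, Fin.append_left,
            Fin.append_right, Fin.sum_univ_four]
          linear_combination h22
      · fin_cases i
        · simp [hGdef, buildG, dotProduct, Fin.sum_univ_add, Fin.append_left,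
            Fin.append_right, Fin.sum_univ_four]
        · simp [hGdef, buildG, dotProduct, Fin.sum_univ_add, Fin.append_left,
            Fin.append_right, Fin.sum_univ_four]
      · fin_cases j
        · simp [hGdef, buildG, dotProduct, Fin.sum_univ_add, Fin.append_left,
            Fin.append_right, Fin.sum_univ_four]
          linear_combination sum_comm' (r i) x₁
        · simp [hGdef, buildG, dotProduct, Fin.sum_univ_add, Fin.append_left,
            Fin.append_right, Fin.sum_univ_four]
          linear_combination sum_comm' (r i) x₂
      · simp [hGdef, buildG, dotProduct, Fin.sum_univ_add, Fin.append_left,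
          Fin.append_right, Fin.sum_univ_four]
        linear_combination ((∑ j', x₁ j' * r i j') * (∑ j', x₁ j' * r j j')
          + (∑ j', x₂ j' * r i j') * (∑ j', x₂ j' * r j j')) * hαβ + hrr i j
    · -- C⊥ ⊆ C
      intro v hv
      rw [hmap]
      have hvG : ∀ idx, v ⬝ᵥ G idx = 0 := (mem_dualCode_span_iff G v).mp hv
      have E1 : v (Fin.castAdd (2*n) 0) + ∑ j, v (Fin.natAdd 4 j) * x₁ j = 0 := by
        have h := hvG (Sum.inl 0); rw [hGl0, dot_split] at h
        simp [dotProduct, Fin.sum_univ_four] at h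
        linear_combination h
      have E2 : v (Fin.castAdd (2*n) 1) + ∑ j, v (Fin.natAdd 4 j) * x₂ j = 0 := by
        have h := hvG (Sum.inl 1); rw [hGl1, dot_split] at h
        simp [dotProduct, Fin.sum_univ_four] at h
        linear_combination h
      have ER : ∀ i,
          v (Fin.castAdd (2*n) 0) * (-(∑ j, x₁ j * r i j))
          + v (Fin.castAdd (2*n) 1) * (-(∑ j, x₂ j * r i j))
          + v (Fin.castAdd (2*n) 2) * (-α * (∑ j, x₁ j * r i j) - β * (∑ j, x₂ j * r i j))
          + v (Fin.castAdd (2*n) 3) * (-β * (∑ j, x₁ j * r i j) + α * (∑ j, x₂ j * r i j))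
          + ∑ j, v (Fin.natAdd 4 j) * r i j = 0 := by
        intro i
        have h := hvG (Sum.inr i); rw [hGr i, dot_split] at h
        simp [dotProduct, Fin.sum_univ_four] at h
        linear_combination h
      set a : R := α * v (Fin.castAdd (2*n) 2) + β * v (Fin.castAdd (2*n) 3)
        - ∑ j, v (Fin.natAdd 4 j) * x₁ j with ha
      set b : R := β * v (Fin.castAdd (2*n) 2) - α * v (Fin.castAdd (2*n) 3)
        - ∑ j, v (Fin.natAdd 4 j) * x₂ j with hb
      set c' : Fin (2*n) → R := fun j => v (Fin.natAdd 4 j) - a * x₁ j - b * x₂ j with hc'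
      have D1 : x₁ ⬝ᵥ c' = α * v (Fin.castAdd (2*n) 2) + β * v (Fin.castAdd (2*n) 3) := by
        rw [show x₁ ⬝ᵥ c' = ∑ j, x₁ j * (v (Fin.natAdd 4 j) - a * x₁ j - b * x₂ j) from rfl,
          sum_mul_sub]
        linear_combination (-a) * h11 - b * h12
          + sum_comm' x₁ (fun j => v (Fin.natAdd 4 j)) + ha
      have D2 : x₂ ⬝ᵥ c' = β * v (Fin.castAdd (2*n) 2) - α * v (Fin.castAdd (2*n) 3) := by
        rw [show x₂ ⬝ᵥ c' = ∑ j, x₂ j * (v (Fin.natAdd 4 j) - a * x₁ j - b * x₂ j) from rfl,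
          sum_mul_sub]
        linear_combination (-a) * (sum_comm' x₂ x₁) - a * h12 - b * h22
          + sum_comm' x₂ (fun j => v (Fin.natAdd 4 j)) + hb
      have hcmem : c' ∈ C₀ := by
        rw [hsd', mem_dualCode_span_iff]
        intro i
        rw [show c' ⬝ᵥ r i
            = ∑ j, (v (Fin.natAdd 4 j) - a * x₁ j - b * x₂ j) * r i j from rfl, sub_sum_mul]
        linear_combination ER i + (∑ j, x₁ j * r i j) * E1 + (∑ j, x₂ j * r i j) * E2
          - (∑ j, x₁ j * r i j) * ha - (∑ j, x₂ j * r i j) * hb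
      refine ⟨(a, b, c'), Submodule.mem_prod.mpr
        ⟨trivial, Submodule.mem_prod.mpr ⟨trivial, hcmem⟩⟩, ?_⟩
      funext idx
      refine Fin.addCases (fun i => ?_) (fun j => ?_) idx
      · fin_cases i
        · show ψ (a, b, c') (Fin.castAdd (2*n) 0) = v (Fin.castAdd (2*n) 0)
          have : ψ (a, b, c') (Fin.castAdd (2*n) 0) = a - x₁ ⬝ᵥ c' := by
            simp [hψdef, Stmt6Aux.psi, Fin.append_left]
          rw [this]
          linear_combination (-1 : R) * D1 + ha - E1
        · show ψ (a, b, c') (Fin.castAdd (2*n) 1) = v (Fin.castAdd (2*n) 1)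
          have : ψ (a, b, c') (Fin.castAdd (2*n) 1) = b - x₂ ⬝ᵥ c' := by
            simp [hψdef, Stmt6Aux.psi, Fin.append_left]
          rw [this]
          linear_combination (-1 : R) * D2 + hb - E2
        · show ψ (a, b, c') (Fin.castAdd (2*n) 2) = v (Fin.castAdd (2*n) 2)
          have : ψ (a, b, c') (Fin.castAdd (2*n) 2) = -α * (x₁ ⬝ᵥ c') - β * (x₂ ⬝ᵥ c') := by
            simp [hψdef, Stmt6Aux.psi, Fin.append_left]
          rw [this]
          linear_combination (-α) * D1 - β * D2 - (v (Fin.castAdd (2*n) 2)) * hαβ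
        · show ψ (a, b, c') (Fin.castAdd (2*n) 3) = v (Fin.castAdd (2*n) 3)
          have : ψ (a, b, c') (Fin.castAdd (2*n) 3) = -β * (x₁ ⬝ᵥ c') + α * (x₂ ⬝ᵥ c') := by
            simp [hψdef, Stmt6Aux.psi, Fin.append_left]
          rw [this]
          linear_combination (-β) * D1 + α * D2 - (v (Fin.castAdd (2*n) 3)) * hαβ
      · show _ = v (Fin.natAdd 4 j)
        simp only [hψdef, Stmt6Aux.psi, LinearMap.coe_mk, AddHom.coe_mk, Fin.append_right,
          Pi.add_apply, Pi.smul_apply, smul_eq_mul, hc']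
        ring
  · -- cardinality
    rw [hmap]
    have hcardmap : Nat.card (Submodule.map ψ P) = Nat.card P :=
      Nat.card_congr (Submodule.equivMapOfInjective ψ hinj P).symm.toEquiv
    have eP : P ≃ R × R × C₀ :=
      { toFun := fun x => (x.1.1, x.1.2.1,
          ⟨x.1.2.2, (Submodule.mem_prod.mp (Submodule.mem_prod.mp x.2).2).2⟩)
        invFun := fun y => ⟨(y.1, y.2.1, y.2.2.1), Submodule.mem_prod.mpr
          ⟨trivial, Submodule.mem_prod.mpr ⟨trivial, y.2.2.2⟩⟩⟩
        left_inv := fun x => rfl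
        right_inv := fun y => rfl }
    rw [hcardmap, Nat.card_congr eP, Nat.card_prod, Nat.card_prod, hcard₀]
    ring
end

section
/- Let p be an odd prime with p ≡ 3 (mod 4) and let m, r ≥ 1. Then there exist units α, β in the Galois ring GR(p^m, r) such that α² + β² + 1 = 0 in GR(p^m, r). -/
private theorem key9 (p : ℕ) (hp : p.Prime) (h4 : p % 4 = 3) :
    ∀ k : ℕ, 1 ≤ k → ∃ a b : ℤ, ¬ (p:ℤ) ∣ a ∧ ¬ (p:ℤ) ∣ b ∧ (p:ℤ)^k ∣ a^2 + b^2 + 1 := by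
  have : Fact p.Prime := ⟨hp⟩
  intro k hk
  induction k with
  | zero => omega
  | succ n ih =>
    rcases Nat.eq_zero_or_pos n with hn | hn
    · subst hn
      obtain ⟨a, b, hab⟩ := ZMod.sq_add_sq p (-1)
      have ha : a ≠ 0 := by
        intro h
        have : IsSquare (-1 : ZMod p) := ⟨b, by rw [← hab, h]; ring⟩
        rw [ZMod.exists_sq_eq_neg_one_iff] at this
        exact this h4
      have hb : b ≠ 0 := by
        intro h
        have : IsSquare (-1 : ZMod p) := ⟨a, by rw [← hab, h]; ring⟩
        rw [ZMod.exists_sq_eq_neg_one_iff] at this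
        exact this h4
      refine ⟨(a.val : ℤ), (b.val : ℤ), ?_, ?_, ?_⟩
      · rw [Int.natCast_dvd_natCast, ← ZMod.natCast_eq_zero_iff,
          ZMod.natCast_val, ZMod.cast_id]
        exact ha
      · rw [Int.natCast_dvd_natCast, ← ZMod.natCast_eq_zero_iff,
          ZMod.natCast_val, ZMod.cast_id]
        exact hb
      · have : (((a.val:ℤ)^2 + (b.val:ℤ)^2 + 1 : ℤ) : ZMod p) = 0 := by
          push_cast [ZMod.natCast_val, ZMod.cast_id]
          rw [hab]; ring
        rw [ZMod.intCast_zmod_eq_zero_iff_dvd] at this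
        simpa using this
    · obtain ⟨a, b, ha, hb, hd⟩ := ih hn
      obtain ⟨s, hs⟩ := hd
      -- invert 2a mod p
      have h2a : ((2 * a : ℤ) : ZMod p) ≠ 0 := by
        intro h
        rw [ZMod.intCast_zmod_eq_zero_iff_dvd] at h
        rcases (Int.Prime.dvd_mul' hp h) with h | h
        · have hp2 : p ∣ 2 := by exact_mod_cast h
          have := Nat.le_of_dvd (by norm_num) hp2
          have := hp.two_le
          omega
        · exact ha h
      set u : ℤ := ((((2 * a : ℤ) : ZMod p))⁻¹.val : ℤ) with hu
      have hinv : (p:ℤ) ∣ 2 * a * u - 1 := by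
        rw [← ZMod.intCast_zmod_eq_zero_iff_dvd]
        have hcu : ((u : ℤ) : ZMod p) = (((2*a : ℤ) : ZMod p))⁻¹ := by
          rw [hu]
          simp only [ZMod.natCast_val, ZMod.intCast_zmod_cast]
        have hxu : ((2*a*u - 1 : ℤ) : ZMod p)
            = ((2*a : ℤ) : ZMod p) * ((u : ℤ) : ZMod p) - 1 := by
          simp only [Int.cast_sub, Int.cast_mul, Int.cast_one]
        rw [hxu, hcu, mul_inv_cancel₀ h2a, sub_self]
      obtain ⟨v, hv⟩ := hinv
      set t : ℤ := -s * u with ht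
      refine ⟨a + t * (p:ℤ)^n, b, ?_, hb, ?_⟩
      · intro h
        apply ha
        have : (p:ℤ) ∣ t * (p:ℤ)^n := Dvd.dvd.mul_left (dvd_pow_self _ (by omega)) t
        have := dvd_sub h this
        simpa using this
      · have expand : (a + t * (p:ℤ)^n)^2 + b^2 + 1
            = (p:ℤ)^n * (s + 2*a*t + t^2*(p:ℤ)^n) := by
          rw [show (a + t * (p:ℤ)^n)^2 + b^2 + 1
              = (a^2 + b^2 + 1) + 2*a*t*(p:ℤ)^n + t^2*((p:ℤ)^n)^2 by ring, hs]
          ring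
        rw [expand, pow_succ]
        apply mul_dvd_mul_left
        have h1 : (p:ℤ) ∣ s + 2*a*t := ⟨-s*v, by rw [ht]; linear_combination (-s) * hv⟩
        have h2 : (p:ℤ) ∣ t^2*(p:ℤ)^n := Dvd.dvd.mul_left (dvd_pow_self _ (by omega)) _
        exact dvd_add h1 h2

/-- for an odd prime `p ≡ 3 (mod 4)` and `m, r ≥ 1`, the Galois ring
`GR(p^m, r) = (ℤ/p^m)[x]/(f)`, for `f` a monic basic irreducible polynomial of degree
`r`, contains units `α, β` with `α² + β² + 1 = 0`. -/
theorem stmt9 (p : ℕ) (hp : p.Prime) (hpodd : Odd p) (h4 : p % 4 = 3)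
    (m r : ℕ) (hm : 1 ≤ m) (hr : 1 ≤ r)
    (f : Polynomial (ZMod (p ^ m))) (hmonic : f.Monic) (hdeg : f.natDegree = r)
    (hbasic : Irreducible (f.map (ZMod.castHom (dvd_pow_self p (by omega : m ≠ 0)) (ZMod p)))) :
    ∃ α β : AdjoinRoot f, IsUnit α ∧ IsUnit β ∧ α ^ 2 + β ^ 2 + 1 = 0 := by
  obtain ⟨a, b, ha, hb, hd⟩ := key9 p hp h4 m hm
  have hu : ∀ x : ℤ, ¬ (p:ℤ) ∣ x → IsUnit ((x : ZMod (p^m))) := by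
    intro x hx
    have hpz : Prime (p:ℤ) := Nat.prime_iff_prime_int.mp hp
    have h1 : IsCoprime ((p:ℤ)^m) x :=
      IsCoprime.pow_left ((hpz.coprime_iff_not_dvd).mpr hx)
    have h2 := h1.map (Int.castRingHom (ZMod (p^m)))
    have hz : ((p : ZMod (p^m)))^m = 0 := by
      rw [← Nat.cast_pow, ZMod.natCast_self]
    simp only [Int.coe_castRingHom] at h2
    push_cast at h2
    rw [hz] at h2
    exact isCoprime_zero_left.mp h2
  have heq : ((a : ZMod (p^m)))^2 + ((b : ZMod (p^m)))^2 + 1 = 0 := by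
    have : (((a^2 + b^2 + 1 : ℤ)) : ZMod (p^m)) = 0 := by
      rw [ZMod.intCast_zmod_eq_zero_iff_dvd]
      exact_mod_cast hd
    push_cast at this
    linear_combination this
  refine ⟨algebraMap (ZMod (p^m)) (AdjoinRoot f) (a : ZMod (p^m)),
    algebraMap (ZMod (p^m)) (AdjoinRoot f) (b : ZMod (p^m)),
    (hu a ha).map _, (hu b hb).map _, ?_⟩
  have := congrArg (algebraMap (ZMod (p^m)) (AdjoinRoot f)) heq
  simpa [map_add, map_pow, map_one] using this
end

section
/- Let C be a free self-dual code over Z₉ of length n. Then the residue code Res(C) = {c mod 3 : c ∈ C} is a self-dual code over GF(3) of length n. -/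
/-- Coordinatewise reduction mod 3 of a vector over `ℤ/9`. -/
def res9 {n : ℕ} (v : Fin n → ZMod 9) : Fin n → ZMod 3 :=
  fun i => ZMod.castHom (by norm_num : (3 : ℕ) ∣ 9) (ZMod 3) (v i)


private lemma zmod9_div (a : ZMod 9) (h : 3 * a = 0) : ∃ b, a = 3 * b := by revert a h; decide

private lemma zmod9_cast_zero (a : ZMod 9)
    (h : (ZMod.castHom (by norm_num : (3:ℕ) ∣ 9) (ZMod 3)) a = 0) : 3 * a = 0 := by
  revert a h; decide

private lemma zmod9_three_mul (a : ZMod 9) (h : 3 * a = 0) :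
    (ZMod.castHom (by norm_num : (3:ℕ) ∣ 9) (ZMod 3)) a = 0 := by
  revert a h; decide

/-- the residue code of a free self-dual code over `ℤ/9` is a self-dual
ternary code (it equals its own dual, as a set of vectors in `GF(3)^n`). -/
theorem stmt10 (n : ℕ) (C : Submodule (ZMod 9) (Fin n → ZMod 9))
    (hfree : Module.Free (ZMod 9) C) (hsd : C = dualCode C) :
    res9 '' (C : Set (Fin n → ZMod 9)) =
      {u : Fin n → ZMod 3 | ∀ w ∈ res9 '' (C : Set (Fin n → ZMod 9)),
        ∑ i, u i * w i = 0} := by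
  classical
  have hρ := ZMod.castHom (by norm_num : (3:ℕ) ∣ 9) (ZMod 3)
  set ρ := ZMod.castHom (by norm_num : (3:ℕ) ∣ 9) (ZMod 3) with hρdef
  apply Set.Subset.antisymm
  · -- Res(C) ⊆ Res(C)^⊥
    rintro u ⟨c, hc, rfl⟩ w ⟨d, hd, rfl⟩
    have h0 : ∑ i, c i * d i = 0 := by
      rw [hsd] at hd; simpa [mul_comm] using hd c hc
    have : ρ (∑ i, c i * d i) = 0 := by rw [h0]; simp
    rw [map_sum] at this
    simpa [res9, hρdef, map_mul] using this
  · -- Res(C)^⊥ ⊆ Res(C)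
    intro u hu
    -- lift u to v over ZMod 9
    set v : Fin n → ZMod 9 := fun i => ((u i).val : ZMod 9) with hv
    have hresv : res9 v = u := by
      funext i
      simp [res9, hv, ZMod.natCast_val, ZMod.cast_id]
    -- 3 • v ∈ C
    have h3v : (3 : ZMod 9) • v ∈ C := by
      rw [hsd]
      intro c hc
      have hsum : ρ (∑ i, v i * c i) = 0 := by
        rw [map_sum]
        have := hu (res9 c) ⟨c, hc, rfl⟩
        simpa [res9, hρdef, map_mul, ← hresv] using this
      have : 3 * (∑ i, v i * c i) = 0 := zmod9_cast_zero _ hsum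
      calc ∑ i, ((3 : ZMod 9) • v) i * c i
          = 3 * ∑ i, v i * c i := by
            rw [Finset.mul_sum]; exact Finset.sum_congr rfl (fun i _ => by
              simp [Pi.smul_apply, smul_eq_mul]; ring)
        _ = 0 := this
    -- use freeness
    haveI : Module.Finite (ZMod 9) C := Module.Finite.of_finite
    let B := Module.Free.chooseBasis (ZMod 9) C
    set x : C := ⟨(3 : ZMod 9) • v, h3v⟩ with hx
    have h3x : (3 : ZMod 9) • x = 0 := by
      apply Subtype.ext
      show (3 : ZMod 9) • ((3 : ZMod 9) • v) = 0
      funext i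
      show (3 : ZMod 9) * ((3 : ZMod 9) * v i) = 0
      rw [← mul_assoc, show (3:ZMod 9) * 3 = 0 by decide, zero_mul]
    have hrep : ∀ j, 3 * (B.repr x j) = 0 := by
      intro j
      have : B.repr ((3 : ZMod 9) • x) j = 0 := by rw [h3x]; simp
      simpa [map_smul, smul_eq_mul] using this
    choose b hb using fun j => zmod9_div _ (hrep j)
    set c : C := ∑ j, b j • B j with hcdef
    have hxc : (3 : ZMod 9) • c = x := by
      rw [hcdef, Finset.smul_sum]
      have : ∀ j ∈ Finset.univ, (3 : ZMod 9) • (b j • B j) = B.repr x j • B j := by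
        intro j _
        rw [smul_smul, ← hb j]
      rw [Finset.sum_congr rfl this, B.sum_repr]
    refine ⟨(c : Fin n → ZMod 9), c.2, ?_⟩
    have hcoord : ∀ i, 3 * ((c : Fin n → ZMod 9) i - v i) = 0 := by
      intro i
      have := congrArg (fun y : C => (y : Fin n → ZMod 9) i) hxc
      simp only [hx] at this
      have h3 : (3 : ZMod 9) * (c : Fin n → ZMod 9) i = (3 : ZMod 9) * v i := this
      rw [mul_sub, h3, sub_self]
    funext i
    have := zmod9_three_mul _ (hcoord i)
    have h2 : ρ ((c : Fin n → ZMod 9) i) = ρ (v i) := by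
      rw [map_sub] at this
      linear_combination this
    rw [← hresv]
    simpa [res9, hρdef] using h2
end

section
/- Let C be a free self-dual code over Z₉ of length n. Then the torsion code Tor(C) = {v mod 3 : 3v ∈ C} equals the residue code Res(C) = {c mod 3 : c ∈ C}, and the minimum Hamming weight of C equals the minimum Hamming weight of Res(C). -/
/-- auxiliary "division by 3" map on `ZMod 9`. -/
def h9 : ZMod 9 → ZMod 9 := fun a => if a = 3 then 1 else if a = 6 then 2 else 0

lemma h9_zero : h9 0 = 0 := rfl

lemma h9_spec : ∀ a : ZMod 9, (3 : ZMod 9) * a = 0 → (3 : ZMod 9) * h9 a = a := by decide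

lemma cast_eq_of_mul3 : ∀ a b : ZMod 9, (3 : ZMod 9) * a = 3 * b →
    ZMod.castHom (by norm_num : (3:ℕ) ∣ 9) (ZMod 3) a
      = ZMod.castHom (by norm_num : (3:ℕ) ∣ 9) (ZMod 3) b := by decide

lemma h9_spec' : ∀ a : ZMod 9,
    ZMod.castHom (by norm_num : (3:ℕ) ∣ 9) (ZMod 3) a = 0 → (3 : ZMod 9) * h9 a = a := by decide

lemma mul3_ne_iff : ∀ a : ZMod 9,
    (3 : ZMod 9) * a ≠ 0 ↔ ZMod.castHom (by norm_num : (3:ℕ) ∣ 9) (ZMod 3) a ≠ 0 := by decide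

/-- In a free module over `ZMod 9`, every 3-torsion element is a multiple of 3. -/
lemma exists_div3 {M : Type*} [AddCommGroup M] [Module (ZMod 9) M] [Module.Free (ZMod 9) M]
    (x : M) (hx : (3 : ZMod 9) • x = 0) : ∃ y : M, x = (3 : ZMod 9) • y := by
  set b := Module.Free.chooseBasis (ZMod 9) M
  refine ⟨b.repr.symm ((b.repr x).mapRange h9 h9_zero), ?_⟩
  have : b.repr x = (3 : ZMod 9) • (b.repr x).mapRange h9 h9_zero := by
    ext i
    have h3 : (3 : ZMod 9) * b.repr x i = 0 := by
      have := congrArg (fun z => b.repr z i) hx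
      simpa using this
    simpa [Finsupp.mapRange_apply] using (h9_spec _ h3).symm
  conv_lhs => rw [← b.repr.symm_apply_apply x, this]
  rw [map_smul]

lemma res9_eq_of_mul3 {n : ℕ} {v w : Fin n → ZMod 9}
    (h : (3 : ZMod 9) • v = (3 : ZMod 9) • w) : res9 v = res9 w := by
  funext i
  exact cast_eq_of_mul3 _ _ (congrFun h i)

lemma norm_smul3 {n : ℕ} (v : Fin n → ZMod 9) :
    hammingNorm ((3 : ZMod 9) • v) = hammingNorm (res9 v) := by
  unfold hammingNorm
  congr 1
  ext i
  rw [Finset.mem_filter, Finset.mem_filter]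
  simpa [res9] using mul3_ne_iff (v i)

lemma norm_res9_le {n : ℕ} (v : Fin n → ZMod 9) : hammingNorm (res9 v) ≤ hammingNorm v :=
  hammingNorm_comp_le_hammingNorm
    (fun _ a => ZMod.castHom (by norm_num : (3:ℕ) ∣ 9) (ZMod 3) a) (fun _ => map_zero _)

theorem stmt11' (n : ℕ) (C : Submodule (ZMod 9) (Fin n → ZMod 9))
    (hfree : Module.Free (ZMod 9) C) :
    res9 '' {v : Fin n → ZMod 9 | (3 : ZMod 9) • v ∈ C} =
        res9 '' (C : Set (Fin n → ZMod 9)) ∧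
      sInf {k : ℕ | ∃ v ∈ C, v ≠ 0 ∧ hammingNorm v = k} =
        sInf {k : ℕ | ∃ u ∈ res9 '' (C : Set (Fin n → ZMod 9)),
          u ≠ 0 ∧ hammingNorm u = k} := by
  haveI := hfree
  have hTor : res9 '' {v : Fin n → ZMod 9 | (3 : ZMod 9) • v ∈ C} =
      res9 '' (C : Set (Fin n → ZMod 9)) := by
    apply Set.Subset.antisymm
    · rintro _ ⟨v, hv, rfl⟩
      have hx : (3 : ZMod 9) • (⟨(3 : ZMod 9) • v, hv⟩ : C) = 0 := by
        apply Subtype.ext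
        show (3 : ZMod 9) • (3 : ZMod 9) • v = 0
        rw [smul_smul, show ((3:ZMod 9) * 3) = 0 from by decide, zero_smul]
      obtain ⟨y, hy⟩ := exists_div3 (⟨(3 : ZMod 9) • v, hv⟩ : C) hx
      have hy' : (3 : ZMod 9) • v = (3 : ZMod 9) • (y : Fin n → ZMod 9) :=
        congrArg Subtype.val hy
      exact ⟨y, y.2, (res9_eq_of_mul3 hy').symm⟩
    · rintro _ ⟨c, hc, rfl⟩
      exact ⟨c, C.smul_mem _ hc, rfl⟩
  refine ⟨hTor, ?_⟩
  set A := {k : ℕ | ∃ v ∈ C, v ≠ 0 ∧ hammingNorm v = k}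
  set B := {k : ℕ | ∃ u ∈ res9 '' (C : Set (Fin n → ZMod 9)), u ≠ 0 ∧ hammingNorm u = k}
  have hAB : ∀ k ∈ A, ∃ m ∈ B, m ≤ k := by
    rintro k ⟨v, hv, hv0, rfl⟩
    by_cases hres : res9 v = 0
    · -- v = 3 • w, and res9 w ∈ Tor = Res with same weight
      set w : Fin n → ZMod 9 := fun i => h9 (v i) with hw
      have h3w : (3 : ZMod 9) • w = v := by
        funext i
        exact h9_spec' (v i) (congrFun hres i)
      have hmem : res9 w ∈ res9 '' (C : Set (Fin n → ZMod 9)) := by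
        rw [← hTor]
        exact ⟨w, by simpa [h3w] using hv, rfl⟩
      have hnorm : hammingNorm (res9 w) = hammingNorm v := by
        rw [← norm_smul3, h3w]
      refine ⟨hammingNorm (res9 w), ⟨res9 w, hmem, ?_, rfl⟩, hnorm.le⟩
      intro h0
      exact hv0 (hammingNorm_eq_zero.mp (by rw [← hnorm, h0, hammingNorm_zero]))
    · exact ⟨hammingNorm (res9 v), ⟨res9 v, ⟨v, hv, rfl⟩, hres, rfl⟩, norm_res9_le v⟩
  have hBA : ∀ k ∈ B, ∃ m ∈ A, m ≤ k := by
    rintro k ⟨_, ⟨c, hc, rfl⟩, hu0, rfl⟩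
    have hnorm : hammingNorm ((3 : ZMod 9) • c) = hammingNorm (res9 c) := norm_smul3 c
    refine ⟨hammingNorm ((3 : ZMod 9) • c), ⟨(3 : ZMod 9) • c, C.smul_mem _ hc, ?_, rfl⟩,
      hnorm.le⟩
    intro h0
    exact hu0 (hammingNorm_eq_zero.mp (by rw [← hnorm, h0, hammingNorm_zero]))
  rcases Set.eq_empty_or_nonempty A with hA | hA
  · rcases Set.eq_empty_or_nonempty B with hB | hB
    · rw [hA, hB]
    · obtain ⟨k, hk⟩ := hB
      obtain ⟨m, hm, _⟩ := hBA k hk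
      exact absurd hm (by rw [hA]; exact not_false)
  · have hB : B.Nonempty := by
      obtain ⟨k, hk⟩ := hA
      obtain ⟨m, hm, _⟩ := hAB k hk
      exact ⟨m, hm⟩
    apply le_antisymm
    · obtain ⟨m, hm, hmk⟩ := hBA _ (Nat.sInf_mem hB)
      exact le_trans (Nat.sInf_le hm) hmk
    · obtain ⟨m, hm, hmk⟩ := hAB _ (Nat.sInf_mem hA)
      exact le_trans (Nat.sInf_le hm) hmk

/-- for a free self-dual code `C` over `ℤ/9`, the torsion code equals
the residue code, and the minimum Hamming weight of `C` equals that of `Res(C)`. -/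
theorem stmt11 (n : ℕ) (C : Submodule (ZMod 9) (Fin n → ZMod 9))
    (hfree : Module.Free (ZMod 9) C) (hsd : C = dualCode C) :
    res9 '' {v : Fin n → ZMod 9 | (3 : ZMod 9) • v ∈ C} =
        res9 '' (C : Set (Fin n → ZMod 9)) ∧
      sInf {k : ℕ | ∃ v ∈ C, v ≠ 0 ∧ hammingNorm v = k} =
        sInf {k : ℕ | ∃ u ∈ res9 '' (C : Set (Fin n → ZMod 9)),
          u ≠ 0 ∧ hammingNorm u = k} := by exact stmt11' n C hfree
end

section
/- Let m ≥ 2 and let C be a self-dual code of length n over Z_m with minimum Euclidean weight d_E(C). Then the minimum norm of the Construction A lattice Λ(C) = (1/√m)·{x ∈ Z^n : x mod m ∈ C} equals min(d_E(C)/m, m). -/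
lemma aux_abs (m : ℕ) (hm : 0 < m) (x : ℤ) :
    ((min ((x : ZMod m)).val (m - ((x : ZMod m)).val) : ℕ) : ℤ)^2 ≤ x^2 := by
  haveI : NeZero m := ⟨hm.ne'⟩
  set a := ((x : ZMod m)).val with ha
  have halt : a < m := ZMod.val_lt _
  have ham : (a:ℤ) ≤ m := by exact_mod_cast halt.le
  have hdvd : (m:ℤ) ∣ x - a := by
    have h0 : ((x - (a:ℤ) : ℤ) : ZMod m) = 0 := by
      rw [Int.cast_sub, Int.cast_natCast, ha, ZMod.natCast_val, ZMod.cast_id, sub_self]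
    exact (ZMod.intCast_zmod_eq_zero_iff_dvd _ _).mp h0
  obtain ⟨k, hk⟩ := hdvd
  have hx : x = a + m * k := by linarith
  have hcast : ((min a (m - a) : ℕ) : ℤ) = min (a:ℤ) ((m:ℤ) - a) := by
    push_cast [halt.le]; rfl
  rw [hcast]
  have h1 : min (a:ℤ) ((m:ℤ) - a) ≤ a := min_le_left _ _
  have h2 : min (a:ℤ) ((m:ℤ) - a) ≤ (m:ℤ) - a := min_le_right _ _
  have h3 : 0 ≤ min (a:ℤ) ((m:ℤ) - a) := le_min (Int.natCast_nonneg a) (by linarith)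
  rcases lt_trichotomy k 0 with hk0 | hk0 | hk0
  · have hk1 : k ≤ -1 := by omega
    have hmk : (m:ℤ) * k ≤ -m := by nlinarith [Int.natCast_nonneg m]
    have h4 : min (a:ℤ) ((m:ℤ) - a) ≤ -x := by linarith
    calc (min (a:ℤ) ((m:ℤ) - a))^2 ≤ (-x)^2 := pow_le_pow_left₀ h3 h4 2
      _ = x^2 := neg_sq x
  · subst hk0
    have h4 : min (a:ℤ) ((m:ℤ) - a) ≤ x := by linarith
    exact pow_le_pow_left₀ h3 h4 2
  · have hk1 : 1 ≤ k := hk0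
    have hmk : (m:ℤ) ≤ (m:ℤ) * k := le_mul_of_one_le_right (Int.natCast_nonneg m) hk1
    have h4 : min (a:ℤ) ((m:ℤ) - a) ≤ x := by
      have : (0:ℤ) ≤ a := Int.natCast_nonneg a
      linarith
    exact pow_le_pow_left₀ h3 h4 2

/-- the minimum norm of the Construction A lattice `Λ(C)` of a self-dual
code `C` over `ℤ/m` equals `min (d_E(C)/m) m`, where `d_E(C)` is the minimum Euclidean
weight of `C`. -/
theorem stmt13 (m n : ℕ) (hm : 2 ≤ m)
    (C : Submodule (ZMod m) (Fin n → ZMod m)) (hsd : C = dualCode C)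
    (dE : ℕ) (hdE : dE = sInf {w : ℕ | ∃ c ∈ C, c ≠ 0 ∧
        w = ∑ i, (min (c i).val (m - (c i).val)) ^ 2}) :
    sInf {t : ℝ | ∃ x : Fin n → ℤ, x ≠ 0 ∧ (fun i => (x i : ZMod m)) ∈ C ∧
        t = (∑ i, (x i : ℝ) ^ 2) / m} =
      min ((dE : ℝ) / m) (m : ℝ) := by
  haveI : NeZero m := ⟨by clear * - hm; omega⟩
  haveI : Fact (1 < m) := ⟨by clear * - hm; omega⟩
  have hm0 : (0:ℝ) < m := by positivity
  rcases Nat.eq_zero_or_pos n with hn | hn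
  · subst hn
    have hdE0 : dE = 0 := by
      rw [hdE]
      convert Nat.sInf_empty
      rw [Set.eq_empty_iff_forall_notMem]
      rintro w ⟨c, _, hne, _⟩
      exact hne (Subsingleton.elim c 0)
    have hSempty : {t : ℝ | ∃ x : Fin 0 → ℤ, x ≠ 0 ∧ (fun i => (x i : ZMod m)) ∈ C ∧
        t = (∑ i, (x i : ℝ) ^ 2) / m} = ∅ := by
      rw [Set.eq_empty_iff_forall_notMem]
      rintro t ⟨x, hne, _⟩
      exact hne (Subsingleton.elim x 0)
    rw [hSempty, Real.sInf_empty, hdE0]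
    simp [hm0.le]
  · -- n ≥ 1
    have hCbot : C ≠ ⊥ := by
      intro h
      have hone : (fun _ : Fin n => (1 : ZMod m)) ∈ dualCode C := by
        intro c hc
        rw [h, Submodule.mem_bot] at hc
        simp [hc]
      rw [← hsd, h, Submodule.mem_bot] at hone
      exact one_ne_zero (congrFun hone ⟨0, hn⟩)
    obtain ⟨c₀, hc₀C, hc₀⟩ := (Submodule.ne_bot_iff C).mp hCbot
    have hWne : {w : ℕ | ∃ c ∈ C, c ≠ 0 ∧
        w = ∑ i, (min (c i).val (m - (c i).val)) ^ 2}.Nonempty :=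
      ⟨_, c₀, hc₀C, hc₀, rfl⟩
    have hdEmem : dE ∈ {w : ℕ | ∃ c ∈ C, c ≠ 0 ∧
        w = ∑ i, (min (c i).val (m - (c i).val)) ^ 2} := hdE ▸ Nat.sInf_mem hWne
    obtain ⟨c, hcC, hcne, hcw⟩ := hdEmem
    set x₀ : Fin n → ℤ := fun i =>
      if 2 * (c i).val ≤ m then ((c i).val : ℤ) else ((c i).val : ℤ) - m with hx₀def
    have hx₀mod : ∀ i, ((x₀ i : ZMod m)) = c i := by
      intro i
      by_cases h : 2 * (c i).val ≤ m <;>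
        simp [hx₀def, h, ZMod.natCast_val, ZMod.cast_id, ZMod.natCast_self]
    have hx₀C : (fun i => (x₀ i : ZMod m)) ∈ C := by
      have : (fun i => ((x₀ i : ZMod m))) = c := funext hx₀mod
      rw [this]; exact hcC
    have hx₀ne : x₀ ≠ 0 := by
      intro h
      apply hcne
      funext i
      rw [← hx₀mod i, congrFun h i]
      simp
    have hx₀sq : ∀ i, (x₀ i : ℝ)^2 = ((min (c i).val (m - (c i).val) : ℕ) : ℝ)^2 := by
      intro i
      by_cases h : 2 * (c i).val ≤ m
      · have hmin : min (c i).val (m - (c i).val) = (c i).val := min_eq_left (by clear * - h; omega)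
        simp [hx₀def, h, hmin]
      · have hv : (c i).val < m := ZMod.val_lt _
        have hmin : min (c i).val (m - (c i).val) = m - (c i).val := min_eq_right (by clear * - h hv; omega)
        rw [hmin]
        simp only [hx₀def, if_neg h]
        push_cast [hv.le]
        ring
    have hsum : ∑ i, (x₀ i : ℝ)^2 = (dE:ℝ) := by
      calc ∑ i, (x₀ i : ℝ)^2
          = ∑ i, ((min (c i).val (m - (c i).val) : ℕ) : ℝ)^2 :=
            Finset.sum_congr rfl (fun i _ => hx₀sq i)
        _ = (dE:ℝ) := by rw [hcw]; push_cast; ring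
    have hdES : (dE:ℝ)/m ∈ {t : ℝ | ∃ x : Fin n → ℤ, x ≠ 0 ∧ (fun i => (x i : ZMod m)) ∈ C ∧
        t = (∑ i, (x i : ℝ) ^ 2) / m} := ⟨x₀, hx₀ne, hx₀C, by rw [hsum]⟩
    set x₁ : Fin n → ℤ := fun i => if i = ⟨0, hn⟩ then (m:ℤ) else 0 with hx₁def
    have hx₁C : (fun i => (x₁ i : ZMod m)) ∈ C := by
      have : (fun i => ((x₁ i : ZMod m))) = 0 := by
        funext i
        by_cases h : i = ⟨0, hn⟩ <;> simp [hx₁def, h]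
      rw [this]; exact C.zero_mem
    have hx₁ne : x₁ ≠ 0 := by
      intro h
      have := congrFun h ⟨0, hn⟩
      simp [hx₁def] at this
      clear * - this hm
      omega
    have hmsum : (∑ i, (x₁ i : ℝ)^2)/m = m := by
      rw [Finset.sum_eq_single (⟨0, hn⟩ : Fin n)]
      · simp only [hx₁def, if_pos rfl]
        push_cast
        field_simp
      · intro b _ hb
        simp [hx₁def, hb]
      · intro h
        exact absurd (Finset.mem_univ _) h
    have hmS : (m:ℝ) ∈ {t : ℝ | ∃ x : Fin n → ℤ, x ≠ 0 ∧ (fun i => (x i : ZMod m)) ∈ C ∧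
        t = (∑ i, (x i : ℝ) ^ 2) / m} := ⟨x₁, hx₁ne, hx₁C, hmsum.symm⟩
    have hlb : ∀ t ∈ {t : ℝ | ∃ x : Fin n → ℤ, x ≠ 0 ∧ (fun i => (x i : ZMod m)) ∈ C ∧
        t = (∑ i, (x i : ℝ) ^ 2) / m}, min ((dE:ℝ)/m) (m:ℝ) ≤ t := by
      rintro t ⟨x, hxne, hxC, rfl⟩
      by_cases h : (fun i => (x i : ZMod m)) = 0
      · obtain ⟨j, hj⟩ := Function.ne_iff.mp hxne
        have hj' : x j ≠ 0 := by simpa using hj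
        have hdvd : (m:ℤ) ∣ x j :=
          (ZMod.intCast_zmod_eq_zero_iff_dvd _ _).mp (congrFun h j)
        have habs : (m:ℤ) ≤ |x j| := Int.le_of_dvd (abs_pos.mpr hj') (((dvd_abs _ _).mpr hdvd))
        have habsR : (m:ℝ) ≤ |(x j : ℝ)| := by
          rw [← Int.cast_abs]
          exact_mod_cast habs
        have h2 : (m:ℝ)^2 ≤ (x j:ℝ)^2 := by
          calc (m:ℝ)^2 ≤ |(x j:ℝ)|^2 := pow_le_pow_left₀ hm0.le habsR 2
            _ = (x j:ℝ)^2 := sq_abs _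
        have h3 : (m:ℝ)^2 ≤ ∑ i, (x i:ℝ)^2 :=
          le_trans h2 (Finset.single_le_sum (fun i _ => sq_nonneg ((x i : ℝ))) (Finset.mem_univ j))
        have h4 : (m:ℝ) ≤ (∑ i, (x i:ℝ)^2)/m := by
          rw [le_div_iff₀ hm0]
          nlinarith
        exact le_trans (min_le_right _ _) h4
      · have hw : dE ≤ ∑ i, (min ((x i : ZMod m)).val (m - ((x i : ZMod m)).val))^2 :=
          hdE ▸ Nat.sInf_le ⟨_, hxC, h, rfl⟩
        have hterm : ∀ i, ((min ((x i : ZMod m)).val (m - ((x i : ZMod m)).val) : ℕ) : ℝ)^2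
            ≤ (x i:ℝ)^2 := by
          intro i
          exact_mod_cast aux_abs m (by clear * - hm; omega) (x i)
        have hsums : (dE:ℝ) ≤ ∑ i, (x i:ℝ)^2 := by
          calc (dE:ℝ)
              ≤ ((∑ i, (min ((x i : ZMod m)).val (m - ((x i : ZMod m)).val))^2 : ℕ) : ℝ) := by
                exact_mod_cast hw
            _ = ∑ i, ((min ((x i : ZMod m)).val (m - ((x i : ZMod m)).val) : ℕ) : ℝ)^2 := by
                push_cast; ring
            _ ≤ ∑ i, (x i:ℝ)^2 := Finset.sum_le_sum (fun i _ => hterm i)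
        have h4 : (dE:ℝ)/m ≤ (∑ i, (x i:ℝ)^2)/m := by gcongr
        exact le_trans (min_le_left _ _) h4
    apply le_antisymm
    · rcases le_total ((dE:ℝ)/m) (m:ℝ) with h | h
      · rw [min_eq_left h]
        exact csInf_le ⟨_, fun t ht => hlb t ht⟩ hdES
      · rw [min_eq_right h]
        exact csInf_le ⟨_, fun t ht => hlb t ht⟩ hmS
    · exact le_csInf ⟨_, hmS⟩ hlb
end

section
/- The 2×4 matrix [[1, 0, 2, 2], [0, 1, 2, -2]] over Z₉ generates a self-dual code over Z₉ of length 4 with minimum Hamming weight 3. -/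
lemma combo_eq (a b : ZMod 9) :
    a • ![1, 0, 2, 2] + b • ![0, 1, 2, -2] = ![a, b, 2*a+2*b, 2*a-2*b] := by
  funext i
  fin_cases i <;> simp <;> ring

lemma key : ∀ a b : ZMod 9, (![a, b, 2*a+2*b, 2*a-2*b] : Fin 4 → ZMod 9) ≠ 0 →
    3 ≤ hammingNorm ![a, b, 2*a+2*b, 2*a-2*b] := by decide

lemma g1norm : hammingNorm (![1, 0, 2, 2] : Fin 4 → ZMod 9) = 3 := by decide

/-- the matrix `[[1,0,2,2],[0,1,2,-2]]` over `ℤ/9` generates a self-dual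
code of length 4 with minimum Hamming weight 3. -/
theorem stmt15 :
    letI C : Submodule (ZMod 9) (Fin 4 → ZMod 9) :=
      Submodule.span (ZMod 9) {![1, 0, 2, 2], ![0, 1, 2, -2]}
    C = dualCode C ∧
      sInf {k : ℕ | ∃ v ∈ C, v ≠ 0 ∧ hammingNorm v = k} = 3 := by
  set g1 : Fin 4 → ZMod 9 := ![1, 0, 2, 2] with hg1
  set g2 : Fin 4 → ZMod 9 := ![0, 1, 2, -2] with hg2
  set C : Submodule (ZMod 9) (Fin 4 → ZMod 9) := Submodule.span (ZMod 9) {g1, g2} with hC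
  have nine : (9 : ZMod 9) = 0 := by decide
  have hg1mem : g1 ∈ C := Submodule.subset_span (Set.mem_insert _ _)
  have hg2mem : g2 ∈ C := Submodule.subset_span (Set.mem_insert_of_mem _ rfl)
  have memC : ∀ v, v ∈ C ↔ ∃ a b : ZMod 9, a • g1 + b • g2 = v := by
    intro v; exact Submodule.mem_span_pair
  constructor
  · apply le_antisymm
    · intro v hv
      obtain ⟨a, b, rfl⟩ := (memC v).mp hv
      intro c hc
      obtain ⟨x, y, rfl⟩ := (memC c).mp hc
      simp only [hg1, hg2, Pi.add_apply, Pi.smul_apply, smul_eq_mul, Fin.sum_univ_four]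
      simp [Matrix.cons_val_zero, Matrix.cons_val_one]
      linear_combination (a*x + b*y) * nine
    · intro v hv
      have h1 := hv g1 hg1mem
      have h2 := hv g2 hg2mem
      simp only [hg1, hg2, Fin.sum_univ_four] at h1 h2
      simp at h1 h2
      refine (memC v).mpr ⟨v 0, v 1, ?_⟩
      funext i
      fin_cases i <;> simp [hg1, hg2]
      · linear_combination 2*h1 + 2*h2 - v 2 * nine
      · linear_combination 2*h1 - 2*h2 - v 3 * nine
  · apply le_antisymm
    · apply Nat.sInf_le
      exact ⟨g1, hg1mem, by decide, g1norm⟩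
    · refine le_csInf ⟨3, g1, hg1mem, by decide, g1norm⟩ ?_
      rintro k ⟨v, hvC, hv0, rfl⟩
      obtain ⟨a, b, rfl⟩ := (memC v).mp hvC
      rw [hg1, hg2, combo_eq] at hv0 ⊢
      exact key a b hv0
end

section
/- Let q be a power of an odd prime with q ≡ 3 (mod 4), and let the building-up matrix G (with first two rows (1,0,0,0|x₁), (0,1,0,0|x₂) and remaining rows (yᵢ|rᵢ)) be as in the building-up construction. Then no nontrivial GF(q)-linear combination of the first two rows of G lies in the span of the bottom n rows; consequently the code generated by G has dimension n + 2. -/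
section aux
variable {F : Type*} [Field F] {n : ℕ} (α β : F) (x₁ x₂ : Fin (2 * n) → F)

/-- The linear map sending `v` to the row `(y(v) | v)` of the building-up matrix. -/
noncomputable def Mmap : (Fin (2 * n) → F) →ₗ[F] (Fin (4 + 2 * n) → F) where
  toFun v := Fin.append
      ![-(∑ j, x₁ j * v j), -(∑ j, x₂ j * v j),
        -α * (∑ j, x₁ j * v j) - β * (∑ j, x₂ j * v j),
        -β * (∑ j, x₁ j * v j) + α * (∑ j, x₂ j * v j)] v
  map_add' u v := by
    funext i
    refine Fin.addCases (fun i => ?_) (fun i => ?_) i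
    · simp only [Fin.append_left, Pi.add_apply, Finset.sum_add_distrib, mul_add]
      fin_cases i <;> simp <;> ring
    · simp [Fin.append_right]
  map_smul' c v := by
    have h1 : ∑ j, x₁ j * (c * v j) = c * ∑ j, x₁ j * v j := by
      rw [Finset.mul_sum]; exact Finset.sum_congr rfl fun j _ => by ring
    have h2 : ∑ j, x₂ j * (c * v j) = c * ∑ j, x₂ j * v j := by
      rw [Finset.mul_sum]; exact Finset.sum_congr rfl fun j _ => by ring
    funext i
    refine Fin.addCases (fun i => ?_) (fun i => ?_) i
    · simp only [Fin.append_left, Pi.smul_apply, smul_eq_mul, RingHom.id_apply]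
      fin_cases i <;> simp <;> (try rw [h1]) <;> (try rw [h2]) <;> (try ring)
    · simp [Fin.append_right]

lemma Mmap_left (v : Fin (2 * n) → F) (i : Fin 4) :
    Mmap α β x₁ x₂ v (Fin.castAdd (2 * n) i) =
      ![-(∑ j, x₁ j * v j), -(∑ j, x₂ j * v j),
        -α * (∑ j, x₁ j * v j) - β * (∑ j, x₂ j * v j),
        -β * (∑ j, x₁ j * v j) + α * (∑ j, x₂ j * v j)] i :=
  Fin.append_left _ _ i

lemma Mmap_right (v : Fin (2 * n) → F) (j : Fin (2 * n)) :
    Mmap α β x₁ x₂ v (Fin.natAdd 4 j) = v j :=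
  Fin.append_right _ _ j

lemma Mmap_inj : Function.Injective (Mmap α β x₁ x₂) := by
  intro u v huv
  funext j
  have := congrFun huv (Fin.natAdd 4 j)
  rwa [Mmap_right, Mmap_right] at this

/-- The standard dot-product bilinear form. -/
noncomputable def dotForm (F : Type*) [Field F] (N : ℕ) :
    LinearMap.BilinForm F (Fin N → F) :=
  LinearMap.mk₂ F (fun v w => ∑ i, v i * w i)
    (fun u v w => by simp [add_mul, Finset.sum_add_distrib])
    (fun c u w => by
      simp only [Pi.smul_apply, smul_eq_mul, Finset.mul_sum]
      exact Finset.sum_congr rfl fun j _ => by ring)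
    (fun u v w => by simp [mul_add, Finset.sum_add_distrib])
    (fun c u w => by
      simp only [Pi.smul_apply, smul_eq_mul, Finset.mul_sum]
      exact Finset.sum_congr rfl fun j _ => by ring)

@[simp] lemma dotForm_apply {F : Type*} [Field F] {N : ℕ} (v w : Fin N → F) :
    dotForm F N v w = ∑ i, v i * w i := rfl

lemma dotForm_refl {F : Type*} [Field F] {N : ℕ} : (dotForm F N).IsRefl := by
  intro u v huv
  rw [dotForm_apply] at huv ⊢
  rw [← huv]
  exact Finset.sum_congr rfl fun i _ => mul_comm _ _

lemma dotForm_nondeg {F : Type*} [Field F] {N : ℕ} : (dotForm F N).Nondegenerate := by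
  refine (LinearMap.IsRefl.nondegenerate_iff_separatingLeft (B := dotForm F N) dotForm_refl).mpr ?_
  intro v hv
  funext i
  have := hv (Pi.single i 1)
  simpa [dotForm, Pi.single_apply, mul_comm] using this

end aux

/-- in the building-up construction, no nontrivial linear combination of
the first two rows lies in the span of the bottom `n` rows; consequently the generated
code has dimension `n + 2`. -/
theorem stmt16 {F : Type*} [Field F] [Fintype F] (p k : ℕ) (hp : p.Prime) (hpodd : Odd p)
    (hcard : Fintype.card F = p ^ k) (h4 : Fintype.card F % 4 = 3)
    (n : ℕ) (α β : F) (hα : α ≠ 0) (hβ : β ≠ 0) (hαβ : α ^ 2 + β ^ 2 + 1 = 0)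
    (r : Fin n → Fin (2 * n) → F) (C₀ : Submodule F (Fin (2 * n) → F))
    (hgen : C₀ = Submodule.span F (Set.range r)) (hsd : C₀ = dualCode C₀)
    (x₁ x₂ : Fin (2 * n) → F)
    (h12 : ∑ j, x₁ j * x₂ j = 0)
    (h11 : ∑ j, x₁ j * x₁ j = -1) (h22 : ∑ j, x₂ j * x₂ j = -1) :
    (∀ c₁ c₂ : F,
        c₁ • buildG α β x₁ x₂ r (Sum.inl 0) + c₂ • buildG α β x₁ x₂ r (Sum.inl 1) ∈
          Submodule.span F (Set.range (fun i : Fin n => buildG α β x₁ x₂ r (Sum.inr i))) →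
        c₁ = 0 ∧ c₂ = 0) ∧
      Module.finrank F (Submodule.span F (Set.range (buildG α β x₁ x₂ r))) = n + 2 := by
  classical
  have hMinj := Mmap_inj α β x₁ x₂
  set Bsp := Submodule.span F (Set.range fun i : Fin n => buildG α β x₁ x₂ r (Sum.inr i))
    with hBsp
  have hbot : (fun i : Fin n => buildG α β x₁ x₂ r (Sum.inr i))
      = fun i => Mmap α β x₁ x₂ (r i) := rfl
  have hBmap : Bsp = Submodule.map (Mmap α β x₁ x₂) C₀ := by
    rw [hBsp, hbot, hgen, Submodule.map_span, ← Set.range_comp]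
    rfl
  -- Part 1
  have part1 : ∀ c₁ c₂ : F,
      c₁ • buildG α β x₁ x₂ r (Sum.inl 0) + c₂ • buildG α β x₁ x₂ r (Sum.inl 1) ∈ Bsp →
      c₁ = 0 ∧ c₂ = 0 := by
    intro c₁ c₂ hmem
    rw [hBmap] at hmem
    obtain ⟨w, -, hw⟩ := hmem
    set s := ∑ j, x₁ j * w j with hsdef
    set t := ∑ j, x₂ j * w j with htdef
    have key : ∀ i : Fin 4,
        ![-s, -t, -α * s - β * t, -β * s + α * t] i
          = c₁ • buildG α β x₁ x₂ r (Sum.inl 0) (Fin.castAdd (2 * n) i)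
            + c₂ • buildG α β x₁ x₂ r (Sum.inl 1) (Fin.castAdd (2 * n) i) := by
      intro i
      have h := congrFun hw (Fin.castAdd (2 * n) i)
      rw [Mmap_left] at h
      simpa using h
    have e0 := key 0
    have e1 := key 1
    have e2 := key 2
    have e3 := key 3
    simp [buildG, Fin.append_left] at e0 e1 e2 e3
    constructor
    · linear_combination -e0 - s * hαβ - α * e2 - β * e3
    · linear_combination -e1 - t * hαβ - β * e2 + α * e3
  -- finrank of C₀
  have hC0n : Module.finrank F C₀ = n := by
    have horth : (dotForm F (2 * n)).orthogonal C₀ = dualCode C₀ := by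
      ext v
      simp only [LinearMap.BilinForm.mem_orthogonal_iff, LinearMap.BilinForm.isOrtho_def,
        dotForm_apply]
      constructor
      · intro h
        intro c hc
        rw [← h c hc]
        exact Finset.sum_congr rfl fun i _ => mul_comm _ _
      · intro h c hc
        rw [← h c hc]
        exact Finset.sum_congr rfl fun i _ => mul_comm _ _
    have hfr := LinearMap.BilinForm.finrank_orthogonal (dotForm_nondeg) C₀
    rw [horth, ← hsd, Module.finrank_fin_fun] at hfr
    have hle : Module.finrank F C₀ ≤ 2 * n := by
      have := Submodule.finrank_le C₀
      rwa [Module.finrank_fin_fun] at this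
    omega
  have hBn : Module.finrank F Bsp = n := by
    rw [hBmap]
    exact ((Submodule.equivMapOfInjective _ hMinj C₀).symm.finrank_eq).trans hC0n
  -- the top two rows
  set T2 := Submodule.span F (Set.range fun i : Fin 2 => buildG α β x₁ x₂ r (Sum.inl i))
    with hT2
  have hT2pair : (Set.range fun i : Fin 2 => buildG α β x₁ x₂ r (Sum.inl i))
      = {buildG α β x₁ x₂ r (Sum.inl 0), buildG α β x₁ x₂ r (Sum.inl 1)} := by
    ext v
    constructor
    · rintro ⟨i, rfl⟩; fin_cases i
      · exact Or.inl rfl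
      · exact Or.inr rfl
    · rintro (rfl | rfl)
      · exact ⟨0, rfl⟩
      · exact ⟨1, rfl⟩
  have hli : LinearIndependent F (fun i : Fin 2 => buildG α β x₁ x₂ r (Sum.inl i)) := by
    rw [linearIndependent_fin2]
    constructor
    · intro h0
      have := congrFun h0 (Fin.castAdd (2 * n) 1)
      simp [buildG, Fin.append_left] at this
    · intro a h
      have := congrFun h (Fin.castAdd (2 * n) 0)
      simp [buildG, Fin.append_left] at this
  have hT2fr : Module.finrank F T2 = 2 := by
    rw [hT2, finrank_span_eq_card hli, Fintype.card_fin]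
  have hinf : T2 ⊓ Bsp = ⊥ := by
    rw [eq_bot_iff]
    rintro v hv
    rw [Submodule.mem_inf] at hv
    obtain ⟨hv2, hvB⟩ := hv
    rw [hT2, hT2pair, Submodule.mem_span_pair] at hv2
    obtain ⟨a, b, rfl⟩ := hv2
    obtain ⟨ha, hb⟩ := part1 a b hvB
    simp [ha, hb]
  have hsup : Submodule.span F (Set.range (buildG α β x₁ x₂ r)) = T2 ⊔ Bsp := by
    rw [hT2, hBsp, ← Submodule.span_union]
    congr 1
    ext v
    constructor
    · rintro ⟨(i | i), rfl⟩
      · exact Or.inl ⟨i, rfl⟩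
      · exact Or.inr ⟨i, rfl⟩
    · rintro (⟨i, rfl⟩ | ⟨i, rfl⟩)
      · exact ⟨Sum.inl i, rfl⟩
      · exact ⟨Sum.inr i, rfl⟩
  refine ⟨part1, ?_⟩
  have hdim := Submodule.finrank_sup_add_finrank_inf_eq T2 Bsp
  rw [hinf, hT2fr, hBn, finrank_bot, add_zero] at hdim
  rw [hsup, hdim]
  omega
end

section
/- Let R be a finite commutative chain ring with residue field of odd characteristic, and let a₁,…,a_k ∈ R^N satisfy aᵢ·aⱼ = 0 for i ≠ j, aᵢ·aᵢ = -1 for 1 ≤ i ≤ 4. Let α, β be units of R with α² + β² + 1 = 0, and set v₁ = a₁ + αa₃ + βa₄ and v₂ = a₂ + βa₃ - αa₄. Then the R-span of {v₁, v₂} is a free R-module of rank 2 (i.e., has cardinality |R|²). -/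
private lemma stmt17_aux {R : Type*} [CommRing R] (N : ℕ) (b0 b1 b2 b3 : Fin N → R)
    (α β : R)
    (h00 : ∑ l, b0 l * b0 l = -1) (h11 : ∑ l, b1 l * b1 l = -1)
    (h10 : ∑ l, b1 l * b0 l = 0) (h20 : ∑ l, b2 l * b0 l = 0)
    (h30 : ∑ l, b3 l * b0 l = 0) (h01 : ∑ l, b0 l * b1 l = 0)
    (h21 : ∑ l, b2 l * b1 l = 0) (h31 : ∑ l, b3 l * b1 l = 0) :
    Nat.card (Submodule.span R {b0 + α • b2 + β • b3, b1 + β • b2 - α • b3})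
      = Nat.card R ^ 2 := by
  set v₁ : Fin N → R := b0 + α • b2 + β • b3 with hv₁
  set v₂ : Fin N → R := b1 + β • b2 - α • b3 with hv₂
  -- dot products
  have s10 : ∑ l, v₁ l * b0 l = -1 := by
    have hpt : ∀ l, v₁ l = b0 l + α * b2 l + β * b3 l := by
      intro l; rw [hv₁]; simp only [Pi.add_apply, Pi.smul_apply, smul_eq_mul]
    calc ∑ l, v₁ l * b0 l
        = ∑ l, (b0 l * b0 l + α * (b2 l * b0 l) + β * (b3 l * b0 l)) := by
          refine Finset.sum_congr rfl fun l _ => ?_; rw [hpt l]; ring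
      _ = (∑ l, b0 l * b0 l) + α * (∑ l, b2 l * b0 l) + β * (∑ l, b3 l * b0 l) := by
          rw [Finset.sum_add_distrib, Finset.sum_add_distrib, Finset.mul_sum, Finset.mul_sum]
      _ = -1 := by rw [h00, h20, h30]; ring
  have s20 : ∑ l, v₂ l * b0 l = 0 := by
    have hpt : ∀ l, v₂ l = b1 l + β * b2 l - α * b3 l := by
      intro l; rw [hv₂]; simp only [Pi.sub_apply, Pi.add_apply, Pi.smul_apply, smul_eq_mul]
    calc ∑ l, v₂ l * b0 l
        = ∑ l, (b1 l * b0 l + β * (b2 l * b0 l) - α * (b3 l * b0 l)) := by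
          refine Finset.sum_congr rfl fun l _ => ?_; rw [hpt l]; ring
      _ = (∑ l, b1 l * b0 l) + β * (∑ l, b2 l * b0 l) - α * (∑ l, b3 l * b0 l) := by
          rw [Finset.sum_sub_distrib, Finset.sum_add_distrib, Finset.mul_sum, Finset.mul_sum]
      _ = 0 := by rw [h10, h20, h30]; ring
  have s11 : ∑ l, v₁ l * b1 l = 0 := by
    have hpt : ∀ l, v₁ l = b0 l + α * b2 l + β * b3 l := by
      intro l; rw [hv₁]; simp only [Pi.add_apply, Pi.smul_apply, smul_eq_mul]
    calc ∑ l, v₁ l * b1 l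
        = ∑ l, (b0 l * b1 l + α * (b2 l * b1 l) + β * (b3 l * b1 l)) := by
          refine Finset.sum_congr rfl fun l _ => ?_; rw [hpt l]; ring
      _ = (∑ l, b0 l * b1 l) + α * (∑ l, b2 l * b1 l) + β * (∑ l, b3 l * b1 l) := by
          rw [Finset.sum_add_distrib, Finset.sum_add_distrib, Finset.mul_sum, Finset.mul_sum]
      _ = 0 := by rw [h01, h21, h31]; ring
  have s21 : ∑ l, v₂ l * b1 l = -1 := by
    have hpt : ∀ l, v₂ l = b1 l + β * b2 l - α * b3 l := by
      intro l; rw [hv₂]; simp only [Pi.sub_apply, Pi.add_apply, Pi.smul_apply, smul_eq_mul]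
    calc ∑ l, v₂ l * b1 l
        = ∑ l, (b1 l * b1 l + β * (b2 l * b1 l) - α * (b3 l * b1 l)) := by
          refine Finset.sum_congr rfl fun l _ => ?_; rw [hpt l]; ring
      _ = (∑ l, b1 l * b1 l) + β * (∑ l, b2 l * b1 l) - α * (∑ l, b3 l * b1 l) := by
          rw [Finset.sum_sub_distrib, Finset.sum_add_distrib, Finset.mul_sum, Finset.mul_sum]
      _ = -1 := by rw [h11, h21, h31]; ring
  -- independence
  have indep : ∀ c d : R, c • v₁ + d • v₂ = 0 → c = 0 ∧ d = 0 := by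
    intro c d h
    have key : ∀ w : Fin N → R, ∑ l, (c • v₁ + d • v₂) l * w l
        = c * (∑ l, v₁ l * w l) + d * (∑ l, v₂ l * w l) := by
      intro w
      rw [Finset.mul_sum, Finset.mul_sum, ← Finset.sum_add_distrib]
      refine Finset.sum_congr rfl fun l _ => ?_
      simp only [Pi.add_apply, Pi.smul_apply, smul_eq_mul]; ring
    have e0 := key b0
    have e1 := key b1
    rw [h, s10, s20] at e0
    rw [h, s11, s21] at e1
    simp only [Pi.zero_apply, zero_mul, Finset.sum_const_zero] at e0 e1
    constructor
    · linear_combination e0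
    · linear_combination e1
  -- the bijection
  have mem : ∀ c d : R, c • v₁ + d • v₂ ∈ Submodule.span R {v₁, v₂} := by
    intro c d
    exact Submodule.add_mem _
      (Submodule.smul_mem _ _ (Submodule.subset_span (by simp)))
      (Submodule.smul_mem _ _ (Submodule.subset_span (by simp)))
  have hbij : Function.Bijective
      (fun p : R × R => (⟨p.1 • v₁ + p.2 • v₂, mem p.1 p.2⟩ :
        Submodule.span R {v₁, v₂})) := by
    constructor
    · rintro ⟨c, d⟩ ⟨c', d'⟩ h
      have h' : c • v₁ + d • v₂ = c' • v₁ + d' • v₂ := congrArg Subtype.val h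
      have : (c - c') • v₁ + (d - d') • v₂ = 0 := by
        rw [sub_smul, sub_smul]
        rw [show c • v₁ - c' • v₁ + (d • v₂ - d' • v₂)
            = (c • v₁ + d • v₂) - (c' • v₁ + d' • v₂) by abel, h', sub_self]
      obtain ⟨hc, hd⟩ := indep _ _ this
      have hc' : c = c' := by linear_combination hc
      have hd' : d = d' := by linear_combination hd
      simp [Prod.ext_iff, hc', hd']
    · rintro ⟨x, hx⟩
      obtain ⟨c, d, hcd⟩ := Submodule.mem_span_pair.mp hx
      exact ⟨(c, d), by simp [hcd]⟩
  calc Nat.card (Submodule.span R {v₁, v₂})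
      = Nat.card (R × R) := (Nat.card_eq_of_bijective _ hbij).symm
    _ = Nat.card R ^ 2 := by rw [Nat.card_prod]; ring

/-- over a finite commutative chain ring with residue field of odd
characteristic, the span of `v₁ = a₁ + αa₃ + βa₄`, `v₂ = a₂ + βa₃ - αa₄` is free of
rank 2, i.e. has cardinality `|R|²`. -/
theorem stmt17 {R : Type*} [CommRing R] [Fintype R] [Nontrivial R] [IsLocalRing R]
    (hchain : ∀ I J : Ideal R, I ≤ J ∨ J ≤ I)
    (hodd : Odd (ringChar (IsLocalRing.ResidueField R)))
    (N kk : ℕ) (hN : 4 ≤ N) (hk : 4 ≤ kk) (a : Fin kk → Fin N → R)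
    (horth : ∀ i j, i ≠ j → ∑ l, a i l * a j l = 0)
    (hself : ∀ i : Fin kk, (i : ℕ) < 4 → ∑ l, a i l * a i l = -1)
    (α β : R) (hα : IsUnit α) (hβ : IsUnit β) (hαβ : α ^ 2 + β ^ 2 + 1 = 0) :
    letI v₁ : Fin N → R :=
      a ⟨0, by omega⟩ + α • a ⟨2, by omega⟩ + β • a ⟨3, by omega⟩
    letI v₂ : Fin N → R :=
      a ⟨1, by omega⟩ + β • a ⟨2, by omega⟩ - α • a ⟨3, by omega⟩
    Nat.card (Submodule.span R {v₁, v₂}) = Nat.card R ^ 2 := by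
  have h10 : (⟨1, by omega⟩ : Fin kk) ≠ ⟨0, by omega⟩ := by simp [Fin.ext_iff]
  have h20 : (⟨2, by omega⟩ : Fin kk) ≠ ⟨0, by omega⟩ := by simp [Fin.ext_iff]
  have h30 : (⟨3, by omega⟩ : Fin kk) ≠ ⟨0, by omega⟩ := by simp [Fin.ext_iff]
  have h01 : (⟨0, by omega⟩ : Fin kk) ≠ ⟨1, by omega⟩ := by simp [Fin.ext_iff]
  have h21 : (⟨2, by omega⟩ : Fin kk) ≠ ⟨1, by omega⟩ := by simp [Fin.ext_iff]
  have h31 : (⟨3, by omega⟩ : Fin kk) ≠ ⟨1, by omega⟩ := by simp [Fin.ext_iff]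
  exact stmt17_aux N (a ⟨0, by omega⟩) (a ⟨1, by omega⟩) (a ⟨2, by omega⟩) (a ⟨3, by omega⟩)
    α β (hself _ (by simp)) (hself _ (by simp)) (horth _ _ h10) (horth _ _ h20)
    (horth _ _ h30) (horth _ _ h01) (horth _ _ h21) (horth _ _ h31)
end
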